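/- arXiv:1801.01302 — 2 statements merged into one kernel-verified Lean document; each statement's English description precedes it below -/
import Mathlib

section
/- Let g : ℝ → ℝ be monotone nondecreasing, f : ℝ → [0,+∞) Borel measurable, and A ⊂ ℝ a Borel set. Then ∫_{g⁻¹(A)} (f ∘ g)(x) · g'(x) dx ≤ ∫_A f dL¹, where g' denotes the (almost everywhere defined) derivative of g and L¹ is Lebesgue measure. -/
open Set MeasureTheory

/-- Only an inequality: the null set where `g` is not differentiable may have an image of positive
measure (as for the Cantor function). -/
theorem Monotone.lintegral_deriv_mul_comp_le_lintegral_image {g : ℝ → ℝ} (hg : Monotone g)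
    {s : Set ℝ} (hs : MeasurableSet s) (u : ℝ → ENNReal) :
    ∫⁻ x in s, ENNReal.ofReal (deriv g x) * u (g x) ≤ ∫⁻ y in g '' s, u y := by
  set t := s ∩ {x | DifferentiableAt ℝ g x}
  have ht : MeasurableSet t := hs.inter (measurableSet_of_differentiableAt ℝ g)
  have hts : t =ᵐ[volume] s :=
    inter_ae_eq_left_of_ae_eq_univ (ae_eq_univ.2 (ae_iff.1 hg.ae_differentiableAt))
  calc ∫⁻ x in s, ENNReal.ofReal (deriv g x) * u (g x)
      = ∫⁻ x in t, ENNReal.ofReal (deriv g x) * u (g x) := setLIntegral_congr hts.symm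
    _ = ∫⁻ y in g '' t, u y :=
      (lintegral_image_eq_lintegral_deriv_mul_of_monotoneOn ht
        (fun x hx => hx.2.hasDerivAt.hasDerivWithinAt) (hg.monotoneOn t) u).symm
    _ ≤ ∫⁻ y in g '' s, u y := lintegral_mono_set (image_mono inter_subset_left)

theorem stmt_5_general (g : ℝ → ℝ) (hg : Monotone g)
    (f : ℝ → ℝ)
    (A : Set ℝ) (hA : MeasurableSet A) :
    ∫⁻ x in g ⁻¹' A, ENNReal.ofReal (f (g x) * deriv g x)
      ≤ ∫⁻ x in A, ENNReal.ofReal (f x) := by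
  calc ∫⁻ x in g ⁻¹' A, ENNReal.ofReal (f (g x) * deriv g x)
      = ∫⁻ x in g ⁻¹' A, ENNReal.ofReal (deriv g x) * ENNReal.ofReal (f (g x)) := by
        refine lintegral_congr fun x => ?_
        rw [mul_comm, ENNReal.ofReal_mul hg.deriv_nonneg]
    _ ≤ ∫⁻ y in g '' (g ⁻¹' A), ENNReal.ofReal (f y) :=
      hg.lintegral_deriv_mul_comp_le_lintegral_image (hg.measurable hA) _
    _ ≤ ∫⁻ x in A, ENNReal.ofReal (f x) := lintegral_mono_set (image_preimage_subset g A)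

theorem stmt_5 (g : ℝ → ℝ) (hg : Monotone g)
    (f : ℝ → ℝ) (hf : Measurable f) (hf0 : ∀ x, 0 ≤ f x)
    (A : Set ℝ) (hA : MeasurableSet A) :
    ∫⁻ x in g ⁻¹' A, ENNReal.ofReal (f (g x) * deriv g x)
      ≤ ∫⁻ x in A, ENNReal.ofReal (f x) :=
  stmt_5_general g hg f A hA
end

section
/- Let g : ℝ → ℝ be a monotone nondecreasing function and A ⊂ ℝ a Borel set. Then ∫_{g⁻¹(A)} g'(x) dx ≤ L¹(A), where g' is the almost-everywhere derivative of g and L¹ denotes Lebesgue measure. -/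
open Set MeasureTheory

/-- Where `deriv g` vanishes (in particular where `g` is not differentiable) the integrand is zero,
so only the set where `g` has a positive derivative contributes, and there the one-dimensional
change of variables for monotone functions applies. -/
theorem MonotoneOn.setLIntegral_ofReal_deriv_le_volume_image {g : ℝ → ℝ} {s : Set ℝ}
    (hg : MonotoneOn g s) (hs : MeasurableSet s) :
    ∫⁻ x in s, ENNReal.ofReal (deriv g x) ≤ volume (g '' s) := by
  set P : Set ℝ := {x | 0 < deriv g x}
  have hP : MeasurableSet P := measurableSet_lt measurable_const (measurable_deriv g)
  have hsupport : (Function.support fun x => ENNReal.ofReal (deriv g x)) ⊆ P := fun x hx => by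
    simpa [P] using hx
  have hderiv : ∀ x ∈ P ∩ s, HasDerivWithinAt g (deriv g x) (P ∩ s) x := fun x hx =>
    (differentiableAt_of_deriv_ne_zero hx.1.ne').hasDerivAt.hasDerivWithinAt
  calc ∫⁻ x in s, ENNReal.ofReal (deriv g x)
      = ∫⁻ x in P ∩ s, ENNReal.ofReal (deriv g x) := by
        rw [← Measure.restrict_restrict hP, setLIntegral_eq_of_support_subset hsupport]
    _ = volume (g '' (P ∩ s)) :=
        lintegral_deriv_eq_volume_image_of_monotoneOn (hP.inter hs) hderiv
          (hg.mono inter_subset_right)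
    _ ≤ volume (g '' s) := measure_mono (image_mono inter_subset_right)

theorem stmt_6 (g : ℝ → ℝ) (hg : Monotone g)
    (A : Set ℝ) (hA : MeasurableSet A) :
    ∫⁻ x in g ⁻¹' A, ENNReal.ofReal (deriv g x) ≤ volume A :=
  ((hg.monotoneOn _).setLIntegral_ofReal_deriv_le_volume_image (hg.measurable hA)).trans
    (measure_mono (image_preimage_subset g A))
end
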